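/- Let two hypotheses have entailed sets A, A' and sizes s, s' ∈ ℕ, where A' is a generalization of A (A ⊆ A'). If s' > fn(A) + s, then S_MDL(A,s) > S_MDL(A',s'). (Sufficiently large generalizations of a hypothesis are never MDL-optimal.) -/

import Mathlib

/-!
Generalizing a hypothesis can gain at most the `fn(A)` positives it missed and can only lose
true negatives, so the accuracy of `A'` exceeds that of `A` by at most `fn(A)`; a size increase
beyond that strictly lowers the MDL score.
-/

open Finset

variable {α : Type*}

/-- True positives: examples entailed by the hypothesis that are positive. -/
def tp [DecidableEq α] (Ep A : Finset α) : ℕ := (A ∩ Ep).card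

/-- True negatives: negative examples not entailed by the hypothesis. -/
def tn [DecidableEq α] (En A : Finset α) : ℕ := (En \ A).card

/-- False negatives: positive examples not entailed by the hypothesis. -/
def fnScore [DecidableEq α] (Ep A : Finset α) : ℕ := (Ep \ A).card

/-- False positives: negative examples entailed by the hypothesis. -/
def fpScore [DecidableEq α] (En A : Finset α) : ℕ := (A ∩ En).card

/-- Accuracy score. -/
def sAcc [DecidableEq α] (Ep En A : Finset α) : ℕ := tp Ep A + tn En A

/-- MDL score: accuracy minus hypothesis size, as an integer. -/
def sMdl [DecidableEq α] (Ep En A : Finset α) (s : ℕ) : ℤ := (tp Ep A + tn En A : ℤ) - s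

section Scores

variable [DecidableEq α] (Ep En : Finset α)

theorem tp_le_card (A : Finset α) : tp Ep A ≤ Ep.card :=
  card_le_card inter_subset_right

theorem tp_add_fnScore (A : Finset α) : tp Ep A + fnScore Ep A = Ep.card := by
  rw [tp, fnScore, inter_comm, card_inter_add_card_sdiff]

theorem tn_antitone : Antitone (tn En) := fun _ _ hAA' =>
  card_le_card (sdiff_subset_sdiff le_rfl hAA')

theorem sMdl_le_of_subset {A A' : Finset α} (hAA' : A ⊆ A') (s s' : ℕ) :
    sMdl Ep En A' s' ≤ sMdl Ep En A s + fnScore Ep A + s - s' := by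
  have htp : tp Ep A' ≤ tp Ep A + fnScore Ep A := tp_add_fnScore Ep A ▸ tp_le_card Ep A'
  have htn : tn En A' ≤ tn En A := tn_antitone En hAA'
  simp only [sMdl]
  omega

end Scores

theorem mdl_large_generalizations_suboptimal [DecidableEq α] (Ep En A A' : Finset α)
    (s s' : ℕ) (hgen : A ⊆ A') (hsize : s' > fnScore Ep A + s) :
    sMdl Ep En A s > sMdl Ep En A' s' := by
  have := sMdl_le_of_subset Ep En hgen s s'
  omega
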